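/- For every complex x with Re x > 0, the q-gamma function converges pointwise to the classical gamma function in the limit q → 1 from below: lim_{q→1⁻} Γ_q(x) = Γ(x). -/

import Mathlib

open Complex Filter

/-- The infinite q-Pochhammer symbol `(a; q) = ∏_{n=0}^∞ (1 - a qⁿ)`. -/
noncomputable def qPoch (a : ℂ) (q : ℝ) : ℂ := ∏' n : ℕ, (1 - a * (q : ℂ) ^ n)

/-- `q^x = exp(x log q)` for the positive real `q`. -/
noncomputable def qpow (q : ℝ) (x : ℂ) : ℂ := Complex.exp (x * (Real.log q : ℂ))

/-- The q-gamma function `Γ_q(x) = (1-q)^{1-x} (q;q)/(q^x;q)`. -/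
noncomputable def qGamma (q : ℝ) (x : ℂ) : ℂ :=
  Complex.exp ((1 - x) * (Real.log (1 - q) : ℂ)) * qPoch (q : ℂ) q / qPoch (qpow q x) q

open Set Topology

/-!
Write `φ_q(w) = log (1 - q ^ w)` and
`T_n f = f (n + 1) - f (n + x) + (x - 1) (f (n + 2) - f (n + 1))` (this is `gammaTerm f x n`).
Then `Γ_q(x) = exp (∑ₙ T_n φ_q)`, and by Euler's product formula `Γ(x) = exp (∑ₙ T_n log)`.
Since `T_n` kills constants, `φ_q` may be replaced by `log ((1 - q ^ w) / (1 - q))`, which tends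
to `log w` as `q → 1`. Moreover `T_n f` is a combination of two second-order Taylor remainders of
`f` at `n + 1`, and `‖φ_q''(w)‖ ≤ 1 / (re w)²` uniformly in `q` (this is `y ≤ 2 sinh (y / 2)`), so
`‖T_n φ_q‖ = O(1 / n²)` uniformly in `q` and Tannery's theorem lets the limit pass through the sum.
-/

section TaylorRemainder

variable {𝕜 F : Type*} [RCLike 𝕜] [NormedAddCommGroup F] [NormedSpace 𝕜 F]

theorem Convex.norm_sub_sub_smul_deriv_le {f f' f'' : 𝕜 → F} {s : Set 𝕜} {C : ℝ}
    (hs : Convex ℝ s) (hf : ∀ z ∈ s, HasDerivWithinAt f (f' z) s z)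
    (hf' : ∀ z ∈ s, HasDerivWithinAt f' (f'' z) s z) (hC : ∀ z ∈ s, ‖f'' z‖ ≤ C)
    {a b : 𝕜} (ha : a ∈ s) (hb : b ∈ s) :
    ‖f b - f a - (b - a) • f' a‖ ≤ C * ‖b - a‖ ^ 2 := by
  have hab : segment ℝ a b ⊆ s := hs.segment_subset ha hb
  have hf'_lip : ∀ z ∈ segment ℝ a b, ‖f' z - f' a‖ ≤ C * ‖b - a‖ := fun z hz ↦
    (hs.norm_image_sub_le_of_norm_hasDerivWithin_le hf' hC ha (hab hz)).trans
      (mul_le_mul_of_nonneg_left (norm_sub_le_of_mem_segment hz)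
        ((norm_nonneg _).trans (hC a ha)))
  have hg : ∀ z ∈ segment ℝ a b,
      HasDerivWithinAt (fun z ↦ f z - z • f' a) (f' z - f' a) (segment ℝ a b) z := fun z hz ↦
    ((hf z (hab hz)).mono hab).sub (by simpa using (hasDerivWithinAt_id z _).smul_const (f' a))
  have := (convex_segment a b).norm_image_sub_le_of_norm_hasDerivWithin_le hg hf'_lip
    (left_mem_segment ℝ a b) (right_mem_segment ℝ a b)
  calc ‖f b - f a - (b - a) • f' a‖ = ‖(f b - b • f' a) - (f a - a • f' a)‖ := by
        rw [sub_smul]; congr 1; abel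
    _ ≤ C * ‖b - a‖ ^ 2 := by rw [sq, ← mul_assoc]; exact this

end TaylorRemainder

section QPow

variable {q : ℝ}

theorem qpow_add (q : ℝ) (a b : ℂ) : qpow q (a + b) = qpow q a * qpow q b := by
  simp only [qpow, add_mul, exp_add]

theorem qpow_natCast (hq : 0 < q) (n : ℕ) : qpow q n = (q : ℂ) ^ n := by
  rw [qpow, exp_nat_mul, ← ofReal_exp, Real.exp_log hq]

theorem qpow_one (hq : 0 < q) : qpow q 1 = q := by
  simpa using qpow_natCast hq 1

theorem norm_qpow (hq : 0 < q) (w : ℂ) : ‖qpow q w‖ = q ^ w.re := by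
  rw [qpow, norm_exp, Real.rpow_def_of_pos hq, mul_comm]
  simp

theorem norm_qpow_lt_one (hq0 : 0 < q) (hq1 : q < 1) {w : ℂ} (hw : 0 < w.re) :
    ‖qpow q w‖ < 1 := by
  rw [norm_qpow hq0]
  exact Real.rpow_lt_one hq0.le hq1 hw

theorem one_sub_qpow_mem_slitPlane (hq0 : 0 < q) (hq1 : q < 1) {w : ℂ} (hw : 0 < w.re) :
    1 - qpow q w ∈ slitPlane := by
  simpa [sub_eq_add_neg] using mem_slitPlane_of_norm_lt_one (by
    simpa using norm_qpow_lt_one hq0 hq1 hw)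

theorem hasDerivAt_qpow (q : ℝ) (w : ℂ) : HasDerivAt (qpow q) (Real.log q * qpow q w) w := by
  rw [mul_comm]
  exact (hasDerivAt_mul_const (x := w) (Real.log q : ℂ)).cexp

theorem hasDerivAt_qpow_one (w : ℂ) : HasDerivAt (fun q : ℝ ↦ qpow q w) w 1 := by
  simpa [qpow] using (((Real.hasDerivAt_log one_ne_zero).ofReal_comp).const_mul w).cexp

theorem tendsto_one_sub_qpow_div_one_sub (w : ℂ) :
    Tendsto (fun q : ℝ ↦ (1 - qpow q w) / (1 - q)) (𝓝[≠] 1) (𝓝 w) := by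
  refine (hasDerivAt_iff_tendsto_slope.mp (hasDerivAt_qpow_one w)).congr fun q ↦ ?_
  simp only [slope_def_module, qpow, Real.log_one, ofReal_zero, mul_zero, exp_zero, real_smul]
  push_cast
  rw [div_eq_inv_mul, ← neg_sub (q : ℂ), ← neg_sub (1 : ℂ) (cexp _), inv_neg]
  ring

end QPow

theorem Real.sq_mul_exp_neg_le_one_sub_exp_neg_sq {y : ℝ} (hy : 0 ≤ y) :
    y ^ 2 * Real.exp (-y) ≤ (1 - Real.exp (-y)) ^ 2 := by
  have hsinh : y ≤ 2 * Real.sinh (y / 2) := by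
    linarith [(Real.self_le_sinh_iff (x := y / 2)).mpr (by linarith)]
  have hsq : (1 - Real.exp (-y)) ^ 2 = (2 * Real.sinh (y / 2)) ^ 2 * Real.exp (-y) := by
    have h : Real.exp (-y) = (Real.exp (y / 2))⁻¹ ^ 2 := by
      rw [← Real.exp_neg, ← Real.exp_nat_mul]; ring_nf
    rw [Real.sinh_eq, Real.exp_neg (y / 2), h]
    field_simp
  rw [hsq]
  gcongr

theorem summable_one_div_natCast_add_sq {σ : ℝ} (hσ : 0 < σ) :
    Summable fun n : ℕ ↦ 1 / ((n : ℝ) + σ) ^ 2 := by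
  refine ((Real.summable_one_div_nat_add_rpow σ 2).mpr one_lt_two).congr fun n ↦ ?_
  rw [abs_of_pos (by positivity), Real.rpow_two]

noncomputable def logOneSubQpow (q : ℝ) (w : ℂ) : ℂ := log (1 - qpow q w)

section LogOneSubQpow

variable {q : ℝ}

theorem hasDerivAt_logOneSubQpow (hq0 : 0 < q) (hq1 : q < 1) {w : ℂ} (hw : 0 < w.re) :
    HasDerivAt (logOneSubQpow q) (-(Real.log q * qpow q w) / (1 - qpow q w)) w :=
  ((hasDerivAt_qpow q w).const_sub 1).clog (one_sub_qpow_mem_slitPlane hq0 hq1 hw)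

theorem hasDerivAt_deriv_logOneSubQpow (hq0 : 0 < q) (hq1 : q < 1) {w : ℂ} (hw : 0 < w.re) :
    HasDerivAt (fun w ↦ -(Real.log q * qpow q w) / (1 - qpow q w))
      (-(Real.log q ^ 2 * qpow q w / (1 - qpow q w) ^ 2)) w := by
  have hne := slitPlane_ne_zero (one_sub_qpow_mem_slitPlane hq0 hq1 hw)
  refine ((((hasDerivAt_qpow q w).const_mul _).neg).div
    ((hasDerivAt_qpow q w).const_sub 1) hne).congr_deriv ?_
  simp only [Pi.neg_apply]
  field_simp
  ring

theorem norm_deriv2_logOneSubQpow_le (hq0 : 0 < q) (hq1 : q < 1) {w : ℂ} (hw : 0 < w.re) :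
    ‖-(Real.log q ^ 2 * qpow q w / (1 - qpow q w) ^ 2)‖ ≤ 1 / w.re ^ 2 := by
  have ht1 : q ^ w.re < 1 := Real.rpow_lt_one hq0.le hq1 hw
  have hnorm : 1 - q ^ w.re ≤ ‖1 - qpow q w‖ := by
    simpa [norm_qpow hq0] using norm_sub_norm_le (1 : ℂ) (qpow q w)
  have hkey := Real.sq_mul_exp_neg_le_one_sub_exp_neg_sq
    (neg_nonneg.mpr (mul_nonpos_of_nonneg_of_nonpos hw.le (Real.log_nonpos hq0.le hq1.le)))
  rw [neg_neg, mul_comm w.re, ← Real.rpow_def_of_pos hq0] at hkey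
  calc ‖-(Real.log q ^ 2 * qpow q w / (1 - qpow q w) ^ 2)‖
      = Real.log q ^ 2 * q ^ w.re / ‖1 - qpow q w‖ ^ 2 := by
        simp [norm_qpow hq0, sq_abs]
    _ ≤ Real.log q ^ 2 * q ^ w.re / (1 - q ^ w.re) ^ 2 := by gcongr
    _ ≤ 1 / w.re ^ 2 := by
        rw [div_le_div_iff₀ (by nlinarith) (by positivity)]
        nlinarith

end LogOneSubQpow

noncomputable def gammaTerm (f : ℂ → ℂ) (x : ℂ) (n : ℕ) : ℂ :=
  f (n + 1) - f (n + x) + (x - 1) * (f (n + 2) - f (n + 1))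

section GammaTerm

variable {x : ℂ}

theorem natCast_add_re_pos (n : ℕ) {w : ℂ} (hw : 0 < w.re) : 0 < ((n : ℂ) + w).re := by
  simp only [add_re, natCast_re]
  positivity

theorem gammaTerm_eq_of_eq_add_const {f g : ℂ → ℂ} (c : ℂ) (hfg : ∀ w, 0 < w.re → f w = g w + c)
    (hx : 0 < x.re) (n : ℕ) : gammaTerm f x n = gammaTerm g x n := by
  rw [gammaTerm, gammaTerm, hfg _ (natCast_add_re_pos n hx),
    hfg _ (natCast_add_re_pos n (w := 1) (by simp)),
    hfg _ (natCast_add_re_pos n (w := 2) (by simp))]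
  ring

theorem tendsto_gammaTerm {α : Type*} {l : Filter α} {F : α → ℂ → ℂ} {f : ℂ → ℂ}
    (hF : ∀ w, 0 < w.re → Tendsto (F · w) l (𝓝 (f w))) (hx : 0 < x.re) (n : ℕ) :
    Tendsto (fun a ↦ gammaTerm (F a) x n) l (𝓝 (gammaTerm f x n)) := by
  have h1 := hF _ (natCast_add_re_pos n (w := 1) (by simp))
  have h2 := hF _ (natCast_add_re_pos n (w := 2) (by simp))
  exact (h1.sub (hF _ (natCast_add_re_pos n hx))).add ((h2.sub h1).const_mul _)

theorem norm_gammaTerm_le {f f' f'' : ℂ → ℂ} {s : Set ℂ} {C : ℝ} (hs : Convex ℝ s)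
    (hf : ∀ z ∈ s, HasDerivWithinAt f (f' z) s z)
    (hf' : ∀ z ∈ s, HasDerivWithinAt f' (f'' z) s z) (hC : ∀ z ∈ s, ‖f'' z‖ ≤ C) (n : ℕ)
    (h1 : (n : ℂ) + 1 ∈ s) (h2 : (n : ℂ) + 2 ∈ s) (hx : (n : ℂ) + x ∈ s) :
    ‖gammaTerm f x n‖ ≤ C * (‖x - 1‖ ^ 2 + ‖x - 1‖) := by
  have hR2 : ‖f (n + 2) - f (n + 1) - f' (n + 1)‖ ≤ C := by
    have h := hs.norm_sub_sub_smul_deriv_le hf hf' hC h1 h2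
    norm_num at h
    exact h
  have hRx : ‖f (n + x) - f (n + 1) - (x - 1) * f' (n + 1)‖ ≤ C * ‖x - 1‖ ^ 2 := by
    simpa using hs.norm_sub_sub_smul_deriv_le hf hf' hC h1 hx
  calc ‖gammaTerm f x n‖
      = ‖(x - 1) * (f (n + 2) - f (n + 1) - f' (n + 1))
          - (f (n + x) - f (n + 1) - (x - 1) * f' (n + 1))‖ := by
        rw [gammaTerm]; ring_nf
    _ ≤ ‖x - 1‖ * C + C * ‖x - 1‖ ^ 2 := by grw [norm_sub_le, norm_mul, hR2, hRx]
    _ = C * (‖x - 1‖ ^ 2 + ‖x - 1‖) := by ring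

end GammaTerm

section QGammaSeries

variable {q : ℝ} {x : ℂ}

theorem norm_gammaTerm_logOneSubQpow_le (hq0 : 0 < q) (hq1 : q < 1) (hx : 0 < x.re) (n : ℕ) :
    ‖gammaTerm (logOneSubQpow q) x n‖ ≤
      1 / ((n : ℝ) + min x.re 1) ^ 2 * (‖x - 1‖ ^ 2 + ‖x - 1‖) := by
  have hσ : 0 < min x.re 1 := lt_min hx one_pos
  have hs : ∀ z ∈ {z : ℂ | n + min x.re 1 ≤ z.re}, 0 < z.re := fun z hz ↦
    (by positivity : (0 : ℝ) < n + min x.re 1).trans_le hz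
  refine norm_gammaTerm_le (convex_halfSpace_re_ge _)
    (fun z hz ↦ (hasDerivAt_logOneSubQpow hq0 hq1 (hs z hz)).hasDerivWithinAt)
    (fun z hz ↦ (hasDerivAt_deriv_logOneSubQpow hq0 hq1 (hs z hz)).hasDerivWithinAt)
    (fun z hz ↦ (norm_deriv2_logOneSubQpow_le hq0 hq1 (hs z hz)).trans ?_) n ?_ ?_ ?_
  · gcongr
    exact hz
  all_goals norm_num [Set.mem_ofPred_eq]

theorem summable_logOneSubQpow (hq0 : 0 < q) (hq1 : q < 1) (w : ℂ) :
    Summable fun n : ℕ ↦ logOneSubQpow q (n + w) := by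
  have hq : ‖(q : ℂ)‖ < 1 := by rwa [norm_real, Real.norm_of_nonneg hq0.le]
  have hgeom := ((summable_geometric_of_norm_lt_one hq).mul_left (qpow q w)).neg
  refine (summable_log_one_add_of_summable hgeom).congr fun n ↦ ?_
  rw [logOneSubQpow, qpow_add, qpow_natCast hq0, ← sub_eq_add_neg, mul_comm]

theorem exp_tsum_logOneSubQpow (hq0 : 0 < q) (hq1 : q < 1) {w : ℂ} (hw : 0 < w.re) :
    exp (∑' n : ℕ, logOneSubQpow q (n + w)) = qPoch (qpow q w) q := by
  have hfactor : ∀ n : ℕ, 1 - qpow q w * (q : ℂ) ^ n = 1 - qpow q (n + w) := fun n ↦ by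
    rw [qpow_add, qpow_natCast hq0, mul_comm]
  simp only [qPoch, hfactor]
  exact cexp_tsum_eq_tprod
    (fun n ↦ slitPlane_ne_zero (one_sub_qpow_mem_slitPlane hq0 hq1 (natCast_add_re_pos n hw)))
    (summable_logOneSubQpow hq0 hq1 w)

theorem exp_tsum_gammaTerm_logOneSubQpow (hq0 : 0 < q) (hq1 : q < 1) (hx : 0 < x.re) :
    exp (∑' n, gammaTerm (logOneSubQpow q) x n) = qGamma q x := by
  have hS := summable_logOneSubQpow hq0 hq1
  have hshift : ∑' n : ℕ, logOneSubQpow q (n + 2) =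
      ∑' n : ℕ, logOneSubQpow q (n + 1) - logOneSubQpow q 1 := by
    rw [(hS 1).tsum_eq_zero_add]
    push_cast
    simp only [zero_add, add_assoc, one_add_one_eq_two, add_sub_cancel_left]
  have hlog1 : logOneSubQpow q 1 = Real.log (1 - q) := by
    rw [logOneSubQpow, qpow_one hq0, ofReal_log (by linarith), ofReal_sub, ofReal_one]
  have htsum : ∑' n, gammaTerm (logOneSubQpow q) x n =
      ∑' n : ℕ, logOneSubQpow q (n + 1) - ∑' n : ℕ, logOneSubQpow q (n + x)
        + (1 - x) * Real.log (1 - q) := by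
    simp only [← hlog1, gammaTerm]
    rw [((hS 1).sub (hS x)).tsum_add (((hS 2).sub (hS 1)).mul_left _), (hS 1).tsum_sub (hS x),
      tsum_mul_left, (hS 2).tsum_sub (hS 1), hshift]
    ring
  rw [htsum, exp_add, exp_sub, exp_tsum_logOneSubQpow hq0 hq1 (by simp),
    exp_tsum_logOneSubQpow hq0 hq1 hx, qpow_one hq0, qGamma]
  ring

theorem tendsto_gammaTerm_logOneSubQpow (hx : 0 < x.re) (n : ℕ) :
    Tendsto (fun q ↦ gammaTerm (logOneSubQpow q) x n) (𝓝[Ioo 0 1] 1)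
      (𝓝 (gammaTerm log x n)) := by
  have hlim : ∀ w : ℂ, 0 < w.re → Tendsto (fun q : ℝ ↦ log ((1 - qpow q w) / (1 - q)))
      (𝓝[Ioo 0 1] 1) (𝓝 (log w)) := fun w hw ↦
    (continuousAt_clog (.inl hw)).tendsto.comp ((tendsto_one_sub_qpow_div_one_sub w).mono_left
      (nhdsWithin_mono _ fun q hq ↦ hq.2.ne))
  refine (tendsto_gammaTerm hlim hx n).congr' ?_
  filter_upwards [self_mem_nhdsWithin] with q ⟨hq0, hq1⟩
  refine gammaTerm_eq_of_eq_add_const (-Real.log (1 - q)) (fun w hw ↦ ?_) hx n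
  have hdiv : (1 - qpow q w) / (1 - q) = ((1 - q)⁻¹ : ℝ) * (1 - qpow q w) := by
    push_cast
    ring
  rw [hdiv, log_ofReal_mul (inv_pos.mpr (sub_pos.mpr hq1))
    (slitPlane_ne_zero (one_sub_qpow_mem_slitPlane hq0 hq1 hw)), Real.log_inv, logOneSubQpow]
  push_cast
  ring

end QGammaSeries

section EulerProduct

variable {x : ℂ}

theorem natCast_add_ne_zero (n : ℕ) {w : ℂ} (hw : 0 < w.re) : (n : ℂ) + w ≠ 0 := fun h ↦
  (natCast_add_re_pos n hw).ne' (by rw [h, zero_re])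

theorem sum_range_gammaTerm_log (N : ℕ) :
    ∑ n ∈ Finset.range N, gammaTerm log x n =
      ∑ n ∈ Finset.range N, (log (n + 1) - log (n + x)) + (x - 1) * log (N + 1) := by
  have htel : ∑ n ∈ Finset.range N, (log ((n : ℂ) + 2) - log (n + 1)) = log (N + 1) := by
    simpa [add_assoc, one_add_one_eq_two] using
      Finset.sum_range_sub (fun n : ℕ ↦ log ((n : ℂ) + 1)) N
  simp only [gammaTerm, Finset.sum_add_distrib, ← Finset.mul_sum, htel]

theorem exp_sum_range_gammaTerm_log_mul (hx : 0 < x.re) (N : ℕ) :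
    exp (∑ n ∈ Finset.range N, gammaTerm log x n) * ((N + 1) / (N + x)) *
      ((N + 1) / (N + 1 + x)) = GammaSeq x (N + 1) := by
  have hN1 : (N : ℂ) + 1 ≠ 0 := natCast_add_ne_zero N (w := 1) (by simp)
  have hprod : exp (∑ n ∈ Finset.range N, (log (n + 1) - log (n + x))) =
      N.factorial / ∏ n ∈ Finset.range N, (x + n) := by
    rw [exp_sum, ← Finset.prod_range_add_one_eq_factorial, Nat.cast_prod, ← Finset.prod_div_distrib]
    refine Finset.prod_congr rfl fun n _ ↦ ?_
    rw [exp_sub, exp_log (natCast_add_ne_zero n (w := 1) (by simp)),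
      exp_log (natCast_add_ne_zero n hx), add_comm x]
    push_cast
    rfl
  have hxN := natCast_add_ne_zero N hx
  have hxN1 : (N : ℂ) + 1 + x ≠ 0 := by exact_mod_cast natCast_add_ne_zero (N + 1) hx
  have hP : ∏ n ∈ Finset.range N, (x + n) ≠ 0 :=
    Finset.prod_ne_zero_iff.mpr fun n _ ↦ add_comm x n ▸ natCast_add_ne_zero n hx
  rw [sum_range_gammaTerm_log, exp_add, hprod, mul_comm (x - 1), ← cpow_def_of_ne_zero hN1,
    GammaSeq, Finset.prod_range_succ, Finset.prod_range_succ, Nat.factorial_succ,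
    cpow_sub _ _ (by exact_mod_cast hN1), cpow_one]
  push_cast
  rw [add_comm x, add_comm x]
  field_simp

theorem tendsto_natCast_add_one_div_add (a : ℂ) :
    Tendsto (fun N : ℕ ↦ ((N : ℂ) + 1) / (N + a)) atTop (𝓝 1) := by
  refine ((tendsto_natCast_div_add_atTop (a - 1)).comp (tendsto_add_atTop_nat 1)).congr fun N ↦ ?_
  simp only [Function.comp_apply, Nat.cast_add, Nat.cast_one]
  ring_nf

theorem exp_tsum_gammaTerm_log (hx : 0 < x.re) (hsum : Summable (gammaTerm log x)) :
    exp (∑' n, gammaTerm log x n) = Gamma x := by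
  have hexp := ((continuous_exp.tendsto _).comp hsum.hasSum.tendsto_sum_nat).mul
    ((tendsto_natCast_add_one_div_add x).mul (tendsto_natCast_add_one_div_add (1 + x)))
  rw [mul_one, mul_one] at hexp
  refine tendsto_nhds_unique (hexp.congr fun N ↦ ?_)
    ((GammaSeq_tendsto_Gamma x).comp (tendsto_add_atTop_nat 1))
  simp only [Function.comp_apply, ← exp_sum_range_gammaTerm_log_mul hx, mul_assoc, add_assoc]

end EulerProduct

theorem qGamma_tendsto_Gamma (x : ℂ) (hx : 0 < x.re) :
    Tendsto (fun q : ℝ => qGamma q x) (nhdsWithin 1 (Set.Ioo (0 : ℝ) 1))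
      (nhds (Complex.Gamma x)) := by
  have hbound : Summable fun n : ℕ ↦ 1 / ((n : ℝ) + min x.re 1) ^ 2 * (‖x - 1‖ ^ 2 + ‖x - 1‖) :=
    (summable_one_div_natCast_add_sq (lt_min hx one_pos)).mul_right _
  have hdom : ∀ᶠ q in 𝓝[Ioo 0 1] 1, ∀ n, ‖gammaTerm (logOneSubQpow q) x n‖ ≤
      1 / ((n : ℝ) + min x.re 1) ^ 2 * (‖x - 1‖ ^ 2 + ‖x - 1‖) := by
    filter_upwards [self_mem_nhdsWithin] with q ⟨hq0, hq1⟩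
    exact norm_gammaTerm_logOneSubQpow_le hq0 hq1 hx
  have hlim := tendsto_gammaTerm_logOneSubQpow hx
  have := right_nhdsWithin_Ioo_neBot (zero_lt_one' ℝ)
  have hsum : Summable (gammaTerm log x) := hbound.of_norm_bounded fun n ↦
    le_of_tendsto (hlim n).norm (hdom.mono fun q hq ↦ hq n)
  rw [← exp_tsum_gammaTerm_log hx hsum]
  refine ((continuous_exp.tendsto _).comp
    (tendsto_tsum_of_dominated_convergence hbound hlim hdom)).congr' ?_
  filter_upwards [self_mem_nhdsWithin] with q ⟨hq0, hq1⟩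
  exact exp_tsum_gammaTerm_logOneSubQpow hq0 hq1 hx
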